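/- Most cochains are nearly cosystolic: Let X be a finite abstract simplicial complex and k ≥ 0 with N = f_k(X) > 0, and set M = f_{k−1}(X) (with f_{−1}(X) = 1). Then the number of k-cochains φ of X over Z/2 satisfying ‖φ‖_csy < (1 − 20·√(M/N)) · N/2 is at most 0.8^M · 2^N. -/

import Mathlib

open Finset

section Simplicial

variable {V : Type*} [DecidableEq V]

/-- `X` is a finite abstract simplicial complex: a finite family of nonempty finite sets
closed under taking nonempty subsets. -/
def IsComplex (X : Finset (Finset V)) : Prop :=
  (∀ σ ∈ X, σ.Nonempty) ∧ ∀ σ ∈ X, ∀ τ ⊆ σ, τ.Nonempty → τ ∈ X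

/-- The `k`-dimensional faces of `X` (faces of cardinality `k+1`). -/
def faces (X : Finset (Finset V)) (k : ℕ) : Finset (Finset V) :=
  X.filter fun σ => σ.card = k + 1

/-- The support of a `k`-cochain. -/
def csupp (X : Finset (Finset V)) (k : ℕ) (φ : Finset V → ZMod 2) : Finset (Finset V) :=
  (faces X k).filter fun σ => φ σ ≠ 0

/-- The norm of a `k`-cochain. -/
def cnorm (X : Finset (Finset V)) (k : ℕ) (φ : Finset V → ZMod 2) : ℕ :=
  (csupp X k φ).card

/-- The coboundary of a `k`-cochain, as a `(k+1)`-cochain. -/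
def cob (X : Finset (Finset V)) (k : ℕ) (φ : Finset V → ZMod 2) : Finset V → ZMod 2 :=
  fun τ => ∑ σ ∈ (faces X k).filter (fun σ => σ ⊆ τ), φ σ

/-- The cosystolic norm of a `k`-cochain, with the reduced convention at `k = 0`. -/
noncomputable def cosys (X : Finset (Finset V)) (k : ℕ) (φ : Finset V → ZMod 2) : ℕ :=
  if k = 0 then
    min (cnorm X 0 φ) (cnorm X 0 fun σ => 1 + φ σ)
  else
    sInf {m | ∃ ψ : Finset V → ZMod 2, m = cnorm X k fun τ => φ τ + cob X (k - 1) ψ τ}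

/-- The `k`-th (coboundary) Cheeger constant, valued in `ℝ≥0∞` (`⊤` if no cochain has
positive cosystolic norm). -/
noncomputable def cheeger (X : Finset (Finset V)) (k : ℕ) : ENNReal :=
  sInf {r : ENNReal | ∃ φ : Finset V → ZMod 2, 0 < cosys X k φ ∧
    r = (cnorm X (k + 1) (cob X k φ) : ENNReal) / (cosys X k φ : ENNReal)}

/-- The boundary of a `k`-chain, as a `(k-1)`-chain. -/
def bdry (X : Finset (Finset V)) (k : ℕ) (c : Finset V → ZMod 2) : Finset V → ZMod 2 :=
  fun τ => ∑ σ ∈ (faces X k).filter (fun σ => τ ⊆ σ), c σ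

/-- A `k`-cycle, with the reduced convention at `k = 0`. -/
def IsCycle (X : Finset (Finset V)) (k : ℕ) (c : Finset V → ZMod 2) : Prop :=
  if k = 0 then ∑ σ ∈ faces X 0, c σ = 0
  else ∀ τ ∈ faces X (k - 1), bdry X k c τ = 0

/-- Evaluation of a `k`-cochain on a `k`-chain. -/
def eval (X : Finset (Finset V)) (k : ℕ) (φ c : Finset V → ZMod 2) : ZMod 2 :=
  ∑ σ ∈ faces X k, φ σ * c σ

end Simplicial

/-- `f_{k-1}(X)`, with the convention `f_{-1}(X) = 1`. -/
def fPrev {V : Type*} [DecidableEq V] (X : Finset (Finset V)) (k : ℕ) : ℕ :=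
  if k = 0 then 1 else (faces X (k - 1)).card

/-- The type of `k`-dimensional faces of `X`. -/
def KFace {V : Type*} [DecidableEq V] (X : Finset (Finset V)) (k : ℕ) : Type _ :=
  {σ : Finset V // σ ∈ faces X k}

/-- The extension by zero of a cochain defined on the `k`-faces of `X` to all of
`Finset V`. -/
noncomputable def extendZero {V : Type*} [DecidableEq V] (X : Finset (Finset V)) (k : ℕ)
    (φ : KFace X k → ZMod 2) : Finset V → ZMod 2 :=
  fun σ => if h : σ ∈ faces X k then φ ⟨σ, h⟩ else 0

/-!
Every cochain `φ` lies within Hamming distance `‖φ‖_csy` of one of at most `2^M` centres: the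
restricted coboundaries `dψ`, or the two constants when `k = 0`. By a Chernoff bound, a Hamming
ball of radius `T` in `(ZMod 2)^N` has at most `e^{εT} (1 + e^{-ε})^N` points for every `ε ≥ 0`,
and `1 + e^{-ε} = 2 e^{-ε/2} cosh (ε/2) ≤ 2 e^{ε²/8 - ε/2}`. For `T = (1 - ε) N/2` and
`ε = 20 √(M/N)` this gives `2^N e^{-3Nε²/8} = 2^N e^{-150 M}` per ball, and `2 e^{-150} ≤ 0.8`.
-/

open Real

lemma one_add_exp_neg_le (ε : ℝ) : 1 + exp (-ε) ≤ 2 * exp (ε ^ 2 / 8 - ε / 2) := by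
  have hcosh := cosh_le_exp_half_sq (ε / 2)
  rw [cosh_eq] at hcosh
  calc 1 + exp (-ε) = exp (-(ε / 2)) * (exp (ε / 2) + exp (-(ε / 2))) := by
        rw [mul_add, ← exp_add, ← exp_add]; ring_nf; simp [add_comm]
    _ ≤ exp (-(ε / 2)) * (2 * exp ((ε / 2) ^ 2 / 2)) := by gcongr; linarith
    _ = 2 * exp (ε ^ 2 / 8 - ε / 2) := by rw [mul_left_comm, ← exp_add]; ring_nf

lemma exp_mul_mul_one_add_exp_neg_pow_le (ε : ℝ) (N : ℕ) :
    exp (ε * ((1 - ε) * (N / 2))) * (1 + exp (-ε)) ^ N ≤ 2 ^ N * exp (-(3 / 8) * N * ε ^ 2) :=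
  calc exp (ε * ((1 - ε) * (N / 2))) * (1 + exp (-ε)) ^ N
      ≤ exp (ε * ((1 - ε) * (N / 2))) * (2 * exp (ε ^ 2 / 8 - ε / 2)) ^ N := by
        gcongr; exact one_add_exp_neg_le ε
    _ = 2 ^ N * exp (-(3 / 8) * N * ε ^ 2) := by
        rw [mul_pow, ← exp_nat_mul, mul_left_comm, ← exp_add]; ring_nf

section Hamming

variable {ι β : Type*} [Fintype ι] [DecidableEq ι] [Fintype β] [DecidableEq β]

lemma sum_pow_hammingDist {R : Type*} [CommSemiring R] (b : ι → β) (x : R) :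
    ∑ φ : ι → β, x ^ hammingDist φ b = (1 + (Fintype.card β - 1) • x) ^ Fintype.card ι := by
  have hcoord : ∀ c : β, ∑ a : β, (if a ≠ c then x else 1) = 1 + (Fintype.card β - 1) • x := by
    intro c
    rw [sum_ite, sum_const, sum_const, filter_ne', card_erase_of_mem (mem_univ c), card_univ]
    simp [filter_eq', add_comm]
  calc ∑ φ : ι → β, x ^ hammingDist φ b = ∑ φ : ι → β, ∏ i, if φ i ≠ b i then x else 1 := by
        refine sum_congr rfl fun φ _ => ?_
        rw [← prod_filter, prod_const, hammingDist]
    _ = ∏ i, ∑ a : β, if a ≠ b i then x else 1 :=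
        (Fintype.prod_sum fun i (a : β) => if a ≠ b i then x else 1).symm
    _ = (1 + (Fintype.card β - 1) • x) ^ Fintype.card ι := by
        simp_rw [hcoord, prod_const, card_univ]

lemma card_hammingBall_le_exp (b : ι → β) (T : ℝ) {ε : ℝ} (hε : 0 ≤ ε) :
    (#{φ | (hammingDist φ b : ℝ) ≤ T} : ℝ) ≤
      exp (ε * T) * (1 + (Fintype.card β - 1) • exp (-ε)) ^ Fintype.card ι :=
  calc (#{φ | (hammingDist φ b : ℝ) ≤ T} : ℝ)
      = ∑ φ with (hammingDist φ b : ℝ) ≤ T, 1 := by simp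
    _ ≤ ∑ φ with (hammingDist φ b : ℝ) ≤ T, exp (ε * T) * exp (-ε) ^ hammingDist φ b := by
        refine sum_le_sum fun φ hφ => ?_
        rw [← exp_nat_mul, ← exp_add]
        exact one_le_exp (by nlinarith [(mem_filter.1 hφ).2])
    _ ≤ ∑ φ, exp (ε * T) * exp (-ε) ^ hammingDist φ b :=
        sum_le_sum_of_subset_of_nonneg (filter_subset _ _) fun _ _ _ => by positivity
    _ = exp (ε * T) * (1 + (Fintype.card β - 1) • exp (-ε)) ^ Fintype.card ι := by
        rw [← mul_sum, sum_pow_hammingDist]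

end Hamming

section Cochains

variable {V : Type*} [DecidableEq V] (X : Finset (Finset V)) (k : ℕ)

instance : Fintype (KFace X k) := inferInstanceAs (Fintype (faces X k))

instance : DecidableEq (KFace X k) := inferInstanceAs (DecidableEq (faces X k))

lemma card_kFace : Fintype.card (KFace X k) = #(faces X k) := Fintype.card_coe _

variable {X k}

lemma extendZero_apply (φ : KFace X k → ZMod 2) (σ : KFace X k) :
    extendZero X k φ σ.1 = φ σ := dif_pos σ.2

lemma cnorm_extendZero_add (φ : KFace X k → ZMod 2) (g : Finset V → ZMod 2) :
    cnorm X k (fun τ => extendZero X k φ τ + g τ) = hammingDist φ fun σ => g σ.1 := by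
  rw [cnorm, csupp, hammingDist, card_filter, card_filter, ← sum_coe_sort (faces X k)]
  refine Fintype.sum_congr _ _ fun σ => ?_
  have hσ : extendZero X k φ σ = φ σ := extendZero_apply φ σ
  simp only [hσ, ne_eq, add_eq_zero_iff_eq_neg, ZMod.neg_eq_self_mod_two]

lemma cosys_zero_extendZero (φ : KFace X 0 → ZMod 2) :
    cosys X 0 (extendZero X 0 φ) = min (hammingDist φ 0) (hammingDist φ 1) := by
  have h0 : cnorm X 0 (extendZero X 0 φ) = hammingDist φ 0 := by
    have h := cnorm_extendZero_add φ 0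
    simp only [Pi.zero_apply, add_zero] at h
    exact h
  have h1 : cnorm X 0 (fun σ => 1 + extendZero X 0 φ σ) = hammingDist φ 1 := by
    have h := cnorm_extendZero_add φ 1
    simp only [Pi.one_apply] at h
    simp only [add_comm (1 : ZMod 2)]
    exact h
  rw [cosys, if_pos rfl, h0, h1]

lemma cob_extendZero_restrict (ψ : Finset V → ZMod 2) :
    cob X k (extendZero X k fun σ => ψ σ.1) = cob X k ψ :=
  funext fun _ => sum_congr rfl fun _ hσ => dif_pos (mem_filter.1 hσ).1

lemma exists_cosys_succ_extendZero_eq {n : ℕ} (φ : KFace X (n + 1) → ZMod 2) :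
    ∃ ψ : KFace X n → ZMod 2,
      cosys X (n + 1) (extendZero X (n + 1) φ) =
        hammingDist φ fun σ => cob X n (extendZero X n ψ) σ.1 := by
  obtain ⟨ψ, hψ⟩ := Nat.sInf_mem (⟨_, 0, rfl⟩ : {m | ∃ ψ : Finset V → ZMod 2,
    m = cnorm X (n + 1) fun τ => extendZero X (n + 1) φ τ + cob X n ψ τ}.Nonempty)
  refine ⟨fun σ => ψ σ.1, ?_⟩
  rw [cosys, if_neg n.succ_ne_zero, Nat.add_sub_cancel, hψ, cob_extendZero_restrict,
    cnorm_extendZero_add]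

variable (X k)

theorem exists_finset_hammingDist_le_cosys :
    ∃ B : Finset (KFace X k → ZMod 2), #B ≤ 2 ^ fPrev X k ∧
      ∀ φ, ∃ b ∈ B, hammingDist φ b ≤ cosys X k (extendZero X k φ) := by
  cases k with
  | zero =>
    refine ⟨{0, 1}, card_le_two, fun φ => ?_⟩
    rw [cosys_zero_extendZero]
    rcases min_choice (hammingDist φ 0) (hammingDist φ 1) with h | h
    · exact ⟨0, by simp, h.ge⟩
    · exact ⟨1, by simp, h.ge⟩
  | succ n =>
    refine ⟨univ.image fun ψ σ => cob X n (extendZero X n ψ) σ.1, ?_, fun φ => ?_⟩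
    · exact card_image_le.trans (by simp [fPrev, card_kFace])
    · obtain ⟨ψ, hψ⟩ := exists_cosys_succ_extendZero_eq φ
      exact ⟨_, mem_image_of_mem _ (mem_univ ψ), hψ.ge⟩

theorem ncard_cosys_lt_le (T : ℝ) {ε : ℝ} (hε : 0 ≤ ε) :
    ({φ : KFace X k → ZMod 2 | (cosys X k (extendZero X k φ) : ℝ) < T}.ncard : ℝ) ≤
      2 ^ fPrev X k * (exp (ε * T) * (1 + exp (-ε)) ^ #(faces X k)) := by
  obtain ⟨B, hB, hcover⟩ := exists_finset_hammingDist_le_cosys X k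
  set ball := fun b => ({φ | (hammingDist φ b : ℝ) ≤ T} : Finset (KFace X k → ZMod 2))
  have hS : {φ | (cosys X k (extendZero X k φ) : ℝ) < T} ⊆ ↑(B.biUnion ball) := fun φ hφ => by
    obtain ⟨b, hb, hd⟩ := hcover φ
    exact mem_biUnion.2 ⟨b, hb, mem_filter.2 ⟨mem_univ φ, (Nat.cast_le.2 hd).trans hφ.le⟩⟩
  have hball (b : KFace X k → ZMod 2) :
      (#(ball b) : ℝ) ≤ exp (ε * T) * (1 + exp (-ε)) ^ #(faces X k) := by
    simpa [card_kFace] using card_hammingBall_le_exp b T hε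
  calc _ ≤ (#(B.biUnion ball) : ℝ) := by
        exact_mod_cast (Set.ncard_le_ncard hS).trans_eq (Set.ncard_coe_finset _)
    _ ≤ ∑ b ∈ B, (#(ball b) : ℝ) := by exact_mod_cast card_biUnion_le
    _ ≤ #B • (exp (ε * T) * (1 + exp (-ε)) ^ #(faces X k)) :=
        sum_le_card_nsmul _ _ _ fun b _ => hball b
    _ ≤ _ := by
        rw [nsmul_eq_mul]
        gcongr
        exact_mod_cast hB

end Cochains

theorem most_cochains_nearly_cosystolic_general {V : Type*} [DecidableEq V]
    (X : Finset (Finset V)) (k : ℕ)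
    (hN : 0 < (faces X k).card) :
    ({φ : KFace X k → ZMod 2 |
          (cosys X k (extendZero X k φ) : ℝ) <
            (1 - 20 * Real.sqrt ((fPrev X k : ℝ) / ((faces X k).card : ℝ))) *
              (((faces X k).card : ℝ) / 2)}.ncard : ℝ) ≤
      (0.8 : ℝ) ^ (fPrev X k) * 2 ^ (faces X k).card := by
  set N := #(faces X k)
  set M := fPrev X k
  set ε := 20 * √((M : ℝ) / N)
  have hε : 0 ≤ ε := by positivity
  have hεN : (N : ℝ) * ε ^ 2 = 400 * M := by
    rw [mul_pow, sq_sqrt (by positivity)]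
    field_simp
    ring
  have h150 : 2 * exp (-150) ≤ (0.8 : ℝ) := by
    rw [exp_neg, ← div_eq_mul_inv, div_le_iff₀ (exp_pos _)]
    linarith [add_one_le_exp (150 : ℝ)]
  calc _ ≤ 2 ^ M * (exp (ε * ((1 - ε) * (N / 2))) * (1 + exp (-ε)) ^ N) :=
        ncard_cosys_lt_le X k _ hε
    _ ≤ 2 ^ M * (2 ^ N * exp (-(3 / 8) * N * ε ^ 2)) := by
        gcongr ?_ * ?_
        exact exp_mul_mul_one_add_exp_neg_pow_le ε N
    _ = (2 * exp (-150)) ^ M * 2 ^ N := by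
        rw [show -(3 / 8) * (N : ℝ) * ε ^ 2 = M * (-150) by linear_combination (-3 / 8) * hεN,
          exp_nat_mul, mul_pow]
        ring
    _ ≤ 0.8 ^ M * 2 ^ N := by gcongr

/-- **Most cochains are nearly cosystolic**: with `N = f_k(X) > 0` and `M = f_{k-1}(X)`,
the number of `k`-cochains `φ` with `‖φ‖_csy < (1 - 20√(M/N)) N/2` is at most
`0.8^M ⬝ 2^N`. -/
theorem most_cochains_nearly_cosystolic {V : Type*} [DecidableEq V]
    (X : Finset (Finset V)) (hX : IsComplex X) (k : ℕ)
    (hN : 0 < (faces X k).card) :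
    ({φ : KFace X k → ZMod 2 |
          (cosys X k (extendZero X k φ) : ℝ) <
            (1 - 20 * Real.sqrt ((fPrev X k : ℝ) / ((faces X k).card : ℝ))) *
              (((faces X k).card : ℝ) / 2)}.ncard : ℝ) ≤
      (0.8 : ℝ) ^ (fPrev X k) * 2 ^ (faces X k).card :=
  most_cochains_nearly_cosystolic_general X k hN
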